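/- arXiv:2208.08125 — 11 statements merged into one kernel-verified Lean document; each statement's English description precedes it below -/
import Mathlib

section
/- Let q and p be odd integers with 2 < p < q. Let c, c', s ∈ ℤⁿ be integer vectors such that c'[i] ≡ c[i] (mod 2) and |c'[i] − (p/q)·c[i]| ≤ 1 for every index i. If |[c·s]_q| < q/2 − (q/p)·‖s‖₁, then [c'·s]_p ≡ [c·s]_q (mod 2). (Here c·s denotes the dot product.) -/
/-!
Write `[c·s]_q = c·s - q k` with `k` the balanced quotient. Since `c' ≈ (p/q) c` entrywise,
`b := c'·s - p k` differs from `(p/q) [c·s]_q` by at most `‖s‖₁`, so the noise bound forces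
`|b| < p/2`, i.e. `b = [c'·s]_p`: both reductions use the same quotient `k`. Their difference
`(c·s - c'·s) - (q - p) k` is then even because `c ≡ c'` and `q ≡ p (mod 2)`.
-/

theorem abs_sum_mul_le_sum_abs {ι R : Type*} [Ring R] [LinearOrder R] [IsStrictOrderedRing R]
    (t : Finset ι) (x s : ι → R) (hx : ∀ i ∈ t, |x i| ≤ 1) :
    |∑ i ∈ t, x i * s i| ≤ ∑ i ∈ t, |s i| :=
  calc |∑ i ∈ t, x i * s i| ≤ ∑ i ∈ t, |x i * s i| := Finset.abs_sum_le_sum_abs _ _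
    _ ≤ ∑ i ∈ t, |s i| := Finset.sum_le_sum fun i hi => by
      rw [abs_mul]
      exact mul_le_of_le_one_left (abs_nonneg _) (hx i hi)

namespace Int

theorem bmod_eq_of_dvd_sub_of_two_mul_abs_lt {v b : ℤ} {m : ℕ} (hdvd : (m : ℤ) ∣ b - v)
    (hb : 2 * |b| < m) : v.bmod m = b := by
  have := le_abs_self b
  have := neg_abs_le b
  rw [bmod_eq_iff (by omega)]
  exact ⟨by omega, by omega, hdvd⟩

theorem bmod_eq_sub_mul_bdiv_of_abs_sub_le {u v : ℤ} {p q : ℕ} (hp : 0 < p) (hq : 0 < q)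
    {E : ℚ} (hclose : |(v : ℚ) - p / q * u| ≤ E)
    (hnoise : |((u.bmod q : ℤ) : ℚ)| < q / 2 - q / p * E) :
    v.bmod p = v - p * u.bdiv q := by
  have hpq : (0 : ℚ) < p / q := by positivity
  have hshift : ((v - p * u.bdiv q : ℤ) : ℚ) = v - p / q * u + p / q * (u.bmod q : ℤ) := by
    rw [bmod_eq_self_sub_mul_bdiv]
    push_cast
    field_simp
    ring
  have hb : |((v - p * u.bdiv q : ℤ) : ℚ)| < p / 2 :=
    calc |((v - p * u.bdiv q : ℤ) : ℚ)|
      _ ≤ |(v : ℚ) - p / q * u| + p / q * |((u.bmod q : ℤ) : ℚ)| := by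
        rw [hshift]
        exact (abs_add_le _ _).trans_eq (by rw [abs_mul, abs_of_pos hpq])
      _ < E + p / q * (q / 2 - q / p * E) :=
        add_lt_add_of_le_of_lt hclose (mul_lt_mul_of_pos_left hnoise hpq)
      _ = p / 2 := by field_simp; ring
  refine bmod_eq_of_dvd_sub_of_two_mul_abs_lt ⟨-u.bdiv q, by ring⟩ ?_
  exact_mod_cast (by linarith : 2 * |((v - p * u.bdiv q : ℤ) : ℚ)| < p)

end Int

theorem modulus_reduction_parity_general (n p q : ℕ) (hp_odd : Odd p) (hq_odd : Odd q)
    (c c' s : Fin n → ℤ)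
    (hparity : ∀ i, c' i ≡ c i [ZMOD 2])
    (hclose : ∀ i, |(c' i : ℚ) - (p : ℚ) / (q : ℚ) * (c i : ℚ)| ≤ 1)
    (hnoise : ((|Int.bmod (∑ i, c i * s i) q| : ℤ) : ℚ) <
      (q : ℚ) / 2 - (q : ℚ) / (p : ℚ) * ∑ i, |(s i : ℚ)|) :
    Int.bmod (∑ i, c' i * s i) p ≡ Int.bmod (∑ i, c i * s i) q [ZMOD 2] := by
  have hdot :
      |((∑ i, c' i * s i : ℤ) : ℚ) - p / q * (∑ i, c i * s i : ℤ)| ≤ ∑ i, |(s i : ℚ)| := by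
    push_cast
    rw [Finset.mul_sum, ← Finset.sum_sub_distrib]
    simpa only [sub_mul, mul_assoc] using
      abs_sum_mul_le_sum_abs _ _ _ fun i _ => hclose i
  rw [Int.bmod_eq_sub_mul_bdiv_of_abs_sub_le hp_odd.pos hq_odd.pos hdot
    (by exact_mod_cast hnoise), Int.bmod_eq_self_sub_mul_bdiv]
  have hdots : ∑ i, c' i * s i ≡ ∑ i, c i * s i [ZMOD 2] :=
    Int.ModEq.sum fun i _ => (hparity i).mul_right _
  have hpq : (p : ℤ) ≡ q [ZMOD 2] := by
    have := Nat.odd_iff.mp hp_odd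
    have := Nat.odd_iff.mp hq_odd
    unfold Int.ModEq
    omega
  exact hdots.sub (hpq.mul_right _)

/-- Modulus reduction preserves the message mod 2 (Lemma 5 of BGV, first part).
`Int.bmod x q` is the representative of `x` modulo `q` in the symmetric
interval `[-q/2, q/2)`. -/
theorem modulus_reduction_parity (n p q : ℕ) (hp_odd : Odd p) (hq_odd : Odd q)
    (hp : 2 < p) (hpq : p < q)
    (c c' s : Fin n → ℤ)
    (hparity : ∀ i, c' i ≡ c i [ZMOD 2])
    (hclose : ∀ i, |(c' i : ℚ) - (p : ℚ) / (q : ℚ) * (c i : ℚ)| ≤ 1)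
    (hnoise : ((|Int.bmod (∑ i, c i * s i) q| : ℤ) : ℚ) <
      (q : ℚ) / 2 - (q : ℚ) / (p : ℚ) * ∑ i, |(s i : ℚ)|) :
    Int.bmod (∑ i, c' i * s i) p ≡ Int.bmod (∑ i, c i * s i) q [ZMOD 2] :=
  modulus_reduction_parity_general n p q hp_odd hq_odd c c' s hparity hclose hnoise
end

section
/- Let q and p be odd integers with 2 < p < q. Let c, c', s ∈ ℤⁿ be integer vectors such that c'[i] ≡ c[i] (mod 2) and |c'[i] − (p/q)·c[i]| ≤ 1 for every index i. If |[c·s]_q| < q/2 − (q/p)·‖s‖₁, then |[c'·s]_p| ≤ (p/q)·|[c·s]_q| + ‖s‖₁ < p/2; that is, the noise after modulus reduction is scaled down by roughly the factor p/q up to an additive term ‖s‖₁. -/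
/-!
Write `e = [c·s]_q = c·s - q·k`. The integer `d = c'·s - p·k` is congruent to `c'·s` modulo `p`,
and over `ℚ` it equals `(c' - (p/q)·c)·s + (p/q)·e`, whose first term is at most `‖s‖₁` in
absolute value because every entry of `c' - (p/q)·c` is. The hypothesis on `e` makes
`(p/q)·|e| + ‖s‖₁ < p/2`, so `d` is already reduced modulo `p`: `[c'·s]_p = d`.
-/

theorem Int.bmod_eq_of_modEq_of_two_mul_abs_lt {x d : ℤ} {p : ℕ} (hxd : x ≡ d [ZMOD p])
    (hd : 2 * |d| < p) : x.bmod p = d := by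
  rw [← Int.emod_bmod, hxd, Int.emod_bmod]
  exact Int.bmod_eq_of_le_mul_two (by linarith [neg_abs_le d]) (by linarith [le_abs_self d])

theorem abs_sum_mul_sub_sum_mul_le {α ι : Type*} [Field α] [LinearOrder α] [IsStrictOrderedRing α]
    (t : Finset ι) (x y z : ι → α) (hxy : ∀ i ∈ t, |x i - y i| ≤ 1) :
    |∑ i ∈ t, x i * z i - ∑ i ∈ t, y i * z i| ≤ ∑ i ∈ t, |z i| := by
  rw [← Finset.sum_sub_distrib]
  calc |∑ i ∈ t, (x i * z i - y i * z i)|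
      ≤ ∑ i ∈ t, |x i * z i - y i * z i| := Finset.abs_sum_le_sum_abs _ _
    _ ≤ ∑ i ∈ t, |z i| := Finset.sum_le_sum fun i hi => by
        rw [← sub_mul, abs_mul]
        exact mul_le_of_le_one_left (abs_nonneg _) (hxy i hi)

theorem Int.cast_bmod_eq_of_abs_sub_div_mul_lt (a b : ℤ) (p q : ℕ) (hq : q ≠ 0)
    (h : |(b : ℚ) - p / q * a| + p / q * |((a.bmod q : ℤ) : ℚ)| < p / 2) :
    ((b.bmod p : ℤ) : ℚ) = b - p / q * a + p / q * (a.bmod q : ℤ) := by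
  set d := b - p * a.bdiv q
  have hd : (d : ℚ) = b - p / q * a + p / q * (a.bmod q : ℤ) := by
    rw [Int.bmod_eq_self_sub_mul_bdiv]
    push_cast [d]
    field_simp
    ring
  have hdp : 2 * |(d : ℚ)| < p := by
    have htriangle := abs_add_le ((b : ℚ) - p / q * a) (p / q * (a.bmod q : ℤ))
    rw [abs_mul, abs_of_nonneg (by positivity : (0 : ℚ) ≤ p / q), ← hd] at htriangle
    linarith
  have hbd : b ≡ d [ZMOD p] := Int.modEq_iff_dvd.mpr ⟨-a.bdiv q, by ring⟩
  rw [Int.bmod_eq_of_modEq_of_two_mul_abs_lt hbd (by exact_mod_cast hdp), hd]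

theorem modulus_reduction_noise_bound_general (n p q : ℕ)
    (hp : 2 < p) (hpq : p < q)
    (c c' s : Fin n → ℤ)
    (hclose : ∀ i, |(c' i : ℚ) - (p : ℚ) / (q : ℚ) * (c i : ℚ)| ≤ 1)
    (hnoise : ((|Int.bmod (∑ i, c i * s i) q| : ℤ) : ℚ) <
      (q : ℚ) / 2 - (q : ℚ) / (p : ℚ) * ∑ i, |(s i : ℚ)|) :
    ((|Int.bmod (∑ i, c' i * s i) p| : ℤ) : ℚ) ≤
      (p : ℚ) / (q : ℚ) * ((|Int.bmod (∑ i, c i * s i) q| : ℤ) : ℚ) + ∑ i, |(s i : ℚ)| ∧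
    (p : ℚ) / (q : ℚ) * ((|Int.bmod (∑ i, c i * s i) q| : ℤ) : ℚ) + ∑ i, |(s i : ℚ)| <
      (p : ℚ) / 2 := by
  have hp0 : (0 : ℚ) < p := by exact_mod_cast (by omega : 0 < p)
  have hq0 : (0 : ℚ) < q := by exact_mod_cast (by omega : 0 < q)
  set a := ∑ i, c i * s i
  set b := ∑ i, c' i * s i
  set e := a.bmod q
  set S : ℚ := ∑ i, |(s i : ℚ)|
  have hrounding : |(b : ℚ) - p / q * a| ≤ S := by
    have := abs_sum_mul_sub_sum_mul_le Finset.univ (fun i => (c' i : ℚ))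
      (fun i => p / q * c i) (fun i => s i) fun i _ => hclose i
    simpa only [b, a, Int.cast_sum, Int.cast_mul, Finset.mul_sum, mul_assoc] using this
  have hsmall : (p : ℚ) / q * ((|e| : ℤ) : ℚ) + S < p / 2 := by
    have := mul_lt_mul_of_pos_left hnoise (div_pos hp0 hq0)
    have hscale : (p : ℚ) / q * (q / 2 - q / p * S) = p / 2 - S := by field_simp
    linarith
  push_cast at hsmall ⊢
  have hbmod := Int.cast_bmod_eq_of_abs_sub_div_mul_lt a b p q (by omega) (by linarith)
  refine ⟨?_, hsmall⟩
  calc |((b.bmod p : ℤ) : ℚ)| ≤ |(b : ℚ) - p / q * a| + |(p : ℚ) / q * e| := by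
        rw [hbmod]; exact abs_add_le _ _
    _ ≤ p / q * |(e : ℚ)| + S := by
        rw [abs_mul, abs_of_pos (div_pos hp0 hq0)]; linarith

/-- Modulus reduction scales the noise down by roughly `p/q`, up to an additive
term `‖s‖₁` (Lemma 5 of BGV, second part).  `Int.bmod x q` is the representative
of `x` modulo `q` in the symmetric interval `[-q/2, q/2)`. -/
theorem modulus_reduction_noise_bound (n p q : ℕ) (hp_odd : Odd p) (hq_odd : Odd q)
    (hp : 2 < p) (hpq : p < q)
    (c c' s : Fin n → ℤ)
    (hparity : ∀ i, c' i ≡ c i [ZMOD 2])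
    (hclose : ∀ i, |(c' i : ℚ) - (p : ℚ) / (q : ℚ) * (c i : ℚ)| ≤ 1)
    (hnoise : ((|Int.bmod (∑ i, c i * s i) q| : ℤ) : ℚ) <
      (q : ℚ) / 2 - (q : ℚ) / (p : ℚ) * ∑ i, |(s i : ℚ)|) :
    ((|Int.bmod (∑ i, c' i * s i) p| : ℤ) : ℚ) ≤
      (p : ℚ) / (q : ℚ) * ((|Int.bmod (∑ i, c i * s i) q| : ℤ) : ℚ) + ∑ i, |(s i : ℚ)| ∧
    (p : ℚ) / (q : ℚ) * ((|Int.bmod (∑ i, c i * s i) q| : ℤ) : ℚ) + ∑ i, |(s i : ℚ)| <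
      (p : ℚ) / 2 :=
  modulus_reduction_noise_bound_general n p q hp hpq c c' s hclose hnoise
end

section
/- Key switching preserves the encrypted message up to small noise: let q ≥ 2, n₁, n₂ ≥ 1, l = ⌈log₂ q⌉ and N₁ = (n₁+1)·l. Let s₁ ∈ ℤ^{n₁+1}, t₂ ∈ ℤ^{n₂} and s₂ = (1, t₂) ∈ ℤ^{n₂+1}. Let A ∈ ℤ^{N₁×n₂}, e ∈ ℤ^{N₁}, and let b ∈ ℤ^{N₁} satisfy b ≡ A·t₂ + e + PowersOfTwo_q(s₁) (mod q) entrywise; set P = [b | −A] ∈ ℤ^{N₁×(n₂+1)}. Then for every c ∈ ℤ^{n₁+1}, the switched ciphertext c₂ = BitDecomp_q(c)ᵀ · P satisfies c₂ · s₂ ≡ c · s₁ + BitDecomp_q(c) · e (mod q). -/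
/-!
Each row `[b k | -A k]` of the key-switching matrix decrypts under `s₂ = (1, t₂)` to
`b k - ⟨A k, t₂⟩ ≡ e k + PowersOfTwo_q(s₁) k`, so `c₂ · s₂ ≡ ⟨BitDecomp_q(c), e⟩ +
⟨BitDecomp_q(c), PowersOfTwo_q(s₁)⟩`. In the last term, regrouping by coordinate gives the
binary expansion of `c j mod q`, which is exact because `q ≤ 2 ^ ⌈log₂ q⌉`; hence it is
`≡ ⟨c, s₁⟩ (mod q)`.
-/

/-- Bit decomposition of an integer vector `x` modulo `q`: the entry at index
`(i, j)` is the `i`-th binary digit of `x j mod q` (taken in `[0, q)`).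
Here `Nat.clog 2 q = ⌈log₂ q⌉`. -/
def bitDecomp (q n : ℕ) (x : Fin n → ℤ) : Fin (Nat.clog 2 q) × Fin n → ℤ :=
  fun k => (x k.2 % (q : ℤ)) / 2 ^ (k.1 : ℕ) % 2

/-- Powers-of-two expansion of an integer vector `y` modulo `q`: the entry at
index `(i, j)` is `2^i · y j`, reduced modulo `q` (taken in `[0, q)`). -/
def powersOfTwo (q n : ℕ) (y : Fin n → ℤ) : Fin (Nat.clog 2 q) × Fin n → ℤ :=
  fun k => (2 ^ (k.1 : ℕ) * y k.2) % (q : ℤ)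

open Finset Matrix

lemma Nat.sum_range_div_pow_mod_mul_pow (b L n : ℕ) :
    ∑ i ∈ range L, n / b ^ i % b * b ^ i = n % b ^ L := by
  induction L with
  | zero => simp [Nat.mod_one]
  | succ L ih =>
    rw [sum_range_succ, ih, pow_succ, Nat.mod_mul]
    ring

lemma Int.sum_div_pow_mod_mul_pow {b L : ℕ} {m : ℤ} (h0 : 0 ≤ m) (h1 : m < b ^ L) :
    ∑ i : Fin L, m / b ^ (i : ℕ) % b * b ^ (i : ℕ) = m := by
  lift m to ℕ using h0
  have hm : m < b ^ L := by exact_mod_cast h1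
  rw [Fin.sum_univ_eq_sum_range (fun i => (m : ℤ) / b ^ i % b * b ^ i)]
  exact_mod_cast (Nat.sum_range_div_pow_mod_mul_pow b L m).trans (Nat.mod_eq_of_lt hm)

lemma Matrix.cons_neg_dotProduct_cons_one {R : Type*} [Ring R] {n : ℕ} (β : R)
    (a t : Fin n → R) :
    Fin.cons β (-a) ⬝ᵥ Fin.cons 1 t = β - a ⬝ᵥ t := by
  rw [← vecCons, ← vecCons, cons_dotProduct_cons, mul_one, neg_dotProduct, sub_eq_add_neg]

section BitDecomp

variable {q n : ℕ}

lemma sum_bitDecomp_mul_pow (hq : 0 < q) (x : Fin n → ℤ) (j : Fin n) :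
    ∑ i, bitDecomp q n x (i, j) * 2 ^ (i : ℕ) = x j % q := by
  have hq' : (0 : ℤ) < q := by exact_mod_cast hq
  have hlt : x j % q < (2 : ℕ) ^ Nat.clog 2 q :=
    calc x j % q < q := Int.emod_lt_of_pos _ hq'
      _ ≤ ((2 ^ Nat.clog 2 q : ℕ) : ℤ) := by exact_mod_cast Nat.le_pow_clog one_lt_two q
      _ = _ := by push_cast; rfl
  exact_mod_cast Int.sum_div_pow_mod_mul_pow (Int.emod_nonneg _ hq'.ne') hlt

lemma bitDecomp_dotProduct_powersOfTwo (hq : 0 < q) (x y : Fin n → ℤ) :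
    bitDecomp q n x ⬝ᵥ powersOfTwo q n y ≡ x ⬝ᵥ y [ZMOD q] :=
  calc bitDecomp q n x ⬝ᵥ powersOfTwo q n y
      ≡ ∑ k, bitDecomp q n x k * (2 ^ (k.1 : ℕ) * y k.2) [ZMOD q] :=
        Int.ModEq.sum fun k _ => (Int.mod_modEq _ _).mul_left _
    _ = ∑ j, x j % q * y j := by
        rw [Fintype.sum_prod_type_right]
        refine sum_congr rfl fun j _ => ?_
        simp_rw [← mul_assoc, ← sum_mul, sum_bitDecomp_mul_pow hq]
    _ ≡ x ⬝ᵥ y [ZMOD q] := Int.ModEq.sum fun j _ => (Int.mod_modEq _ _).mul_right _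

end BitDecomp

theorem key_switching_correct_general (q : ℕ) (hq : 2 ≤ q) (n₁ n₂ : ℕ)
    (s₁ : Fin (n₁ + 1) → ℤ) (t₂ : Fin n₂ → ℤ)
    (A : Fin (Nat.clog 2 q) × Fin (n₁ + 1) → Fin n₂ → ℤ)
    (e b : Fin (Nat.clog 2 q) × Fin (n₁ + 1) → ℤ)
    (hb : ∀ k, b k ≡ (∑ j, A k j * t₂ j) + e k + powersOfTwo q (n₁ + 1) s₁ k [ZMOD (q : ℤ)])
    (c : Fin (n₁ + 1) → ℤ)
    (c₂ : Fin (n₂ + 1) → ℤ)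
    (hc₂ : ∀ j, c₂ j = ∑ k, bitDecomp q (n₁ + 1) c k *
      (Fin.cons (b k) (fun j' => -A k j') : Fin (n₂ + 1) → ℤ) j) :
    (∑ j, c₂ j * (Fin.cons 1 t₂ : Fin (n₂ + 1) → ℤ) j)
      ≡ (∑ i, c i * s₁ i) + ∑ k, bitDecomp q (n₁ + 1) c k * e k [ZMOD (q : ℤ)] := by
  set d := bitDecomp q (n₁ + 1) c
  have hdecrypt : ∀ k, Fin.cons (b k) (-A k) ⬝ᵥ Fin.cons 1 t₂
      ≡ (e + powersOfTwo q (n₁ + 1) s₁) k [ZMOD q] := fun k => by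
    have hbk : b k ≡ A k ⬝ᵥ t₂ + e k + powersOfTwo q (n₁ + 1) s₁ k [ZMOD q] := hb k
    rw [cons_neg_dotProduct_cons_one]
    simpa only [Pi.add_apply, add_assoc, add_sub_cancel_left] using hbk.sub_right (A k ⬝ᵥ t₂)
  change c₂ ⬝ᵥ Fin.cons 1 t₂ ≡ c ⬝ᵥ s₁ + d ⬝ᵥ e [ZMOD q]
  calc c₂ ⬝ᵥ Fin.cons 1 t₂ = d ⬝ᵥ (of fun k => Fin.cons (b k) (-A k)) *ᵥ Fin.cons 1 t₂ := by
        rw [dotProduct_mulVec]; exact congrArg (· ⬝ᵥ _) (funext hc₂)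
    _ ≡ d ⬝ᵥ (e + powersOfTwo q (n₁ + 1) s₁) [ZMOD q] :=
        Int.ModEq.sum fun k _ => (hdecrypt k).mul_left _
    _ = d ⬝ᵥ powersOfTwo q (n₁ + 1) s₁ + d ⬝ᵥ e := by rw [dotProduct_add, add_comm]
    _ ≡ c ⬝ᵥ s₁ + d ⬝ᵥ e [ZMOD q] :=
        (bitDecomp_dotProduct_powersOfTwo (by omega) c s₁).add_right _

/-- Key switching preserves the encrypted message up to the small error
`BitDecomp_q(c) · e`.  The rows of the matrices `A`, `P` and the entries of
`b`, `e` are indexed by `Fin (⌈log₂ q⌉) × Fin (n₁+1)`, which has cardinality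
`N₁ = (n₁+1)·⌈log₂ q⌉`; the row `P k` is `[b k ∣ -A k]`, and `s₂ = (1, t₂)`. -/
theorem key_switching_correct (q : ℕ) (hq : 2 ≤ q) (n₁ n₂ : ℕ) (hn₁ : 1 ≤ n₁) (hn₂ : 1 ≤ n₂)
    (s₁ : Fin (n₁ + 1) → ℤ) (t₂ : Fin n₂ → ℤ)
    (A : Fin (Nat.clog 2 q) × Fin (n₁ + 1) → Fin n₂ → ℤ)
    (e b : Fin (Nat.clog 2 q) × Fin (n₁ + 1) → ℤ)
    (hb : ∀ k, b k ≡ (∑ j, A k j * t₂ j) + e k + powersOfTwo q (n₁ + 1) s₁ k [ZMOD (q : ℤ)])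
    (c : Fin (n₁ + 1) → ℤ)
    (c₂ : Fin (n₂ + 1) → ℤ)
    (hc₂ : ∀ j, c₂ j = ∑ k, bitDecomp q (n₁ + 1) c k *
      (Fin.cons (b k) (fun j' => -A k j') : Fin (n₂ + 1) → ℤ) j) :
    (∑ j, c₂ j * (Fin.cons 1 t₂ : Fin (n₂ + 1) → ℤ) j)
      ≡ (∑ i, c i * s₁ i) + ∑ k, bitDecomp q (n₁ + 1) c k * e k [ZMOD (q : ℤ)] :=
  key_switching_correct_general q hq n₁ n₂ s₁ t₂ A e b hb c c₂ hc₂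
end

section
/- The integer-based (DGHV-style) scheme is additively homomorphic: let p be an odd integer with p ≥ 3, and for i = 1, 2 let cᵢ = mᵢ' + p·qᵢ with qᵢ ∈ ℤ, mᵢ' ∈ ℤ and mᵢ' ≡ mᵢ (mod 2) for messages mᵢ ∈ {0,1}. If |m₁' + m₂'| < p/2, then ([c₁ + c₂]_p) mod 2 = (m₁ + m₂) mod 2. -/
theorem Int.bmod_eq_self_of_two_mul_abs_lt {s : ℤ} {p : ℕ} (h : 2 * |s| < p) :
    s.bmod p = s := by
  have := le_abs_self s
  have := neg_abs_le s
  exact Int.bmod_eq_of_le (by omega) (by omega)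

theorem Int.bmod_add_mul_self_of_two_mul_abs_lt {m : ℤ} {p : ℕ} (q : ℤ) (h : 2 * |m| < p) :
    (m + p * q).bmod p = m := by
  rw [Int.add_mul_bmod_self_left, Int.bmod_eq_self_of_two_mul_abs_lt h]

theorem dghv_additively_homomorphic_general (p : ℕ)
    (m₁ m₂ m₁' m₂' q₁ q₂ c₁ c₂ : ℤ)
    (hm₁' : m₁' ≡ m₁ [ZMOD 2]) (hm₂' : m₂' ≡ m₂ [ZMOD 2])
    (hc₁ : c₁ = m₁' + (p : ℤ) * q₁) (hc₂ : c₂ = m₂' + (p : ℤ) * q₂)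
    (hnoise : ((|m₁' + m₂'| : ℤ) : ℚ) < (p : ℚ) / 2) :
    (Int.bmod (c₁ + c₂) p) % 2 = (m₁ + m₂) % 2 := by
  have hsmall : 2 * |m₁' + m₂'| < (p : ℤ) := by
    push_cast at hnoise; qify; linarith
  have hsum : c₁ + c₂ = (m₁' + m₂') + p * (q₁ + q₂) := by rw [hc₁, hc₂]; ring
  rw [hsum, Int.bmod_add_mul_self_of_two_mul_abs_lt _ hsmall]
  exact hm₁'.add hm₂'

/-- The integer-based (DGHV-style) scheme is additively homomorphic: for ciphertexts
`cᵢ = mᵢ' + p·qᵢ` with `mᵢ' ≡ mᵢ (mod 2)`, if `|m₁' + m₂'| < p/2` then the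
decryption `([c₁+c₂]_p) mod 2` equals `(m₁ + m₂) mod 2`.  Here `Int.bmod x p` is the
representative of `x` modulo `p` in the symmetric interval `[-p/2, p/2)`. -/
theorem dghv_additively_homomorphic (p : ℕ) (hp_odd : Odd p) (hp : 3 ≤ p)
    (m₁ m₂ m₁' m₂' q₁ q₂ c₁ c₂ : ℤ)
    (hm₁ : m₁ = 0 ∨ m₁ = 1) (hm₂ : m₂ = 0 ∨ m₂ = 1)
    (hm₁' : m₁' ≡ m₁ [ZMOD 2]) (hm₂' : m₂' ≡ m₂ [ZMOD 2])
    (hc₁ : c₁ = m₁' + (p : ℤ) * q₁) (hc₂ : c₂ = m₂' + (p : ℤ) * q₂)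
    (hnoise : ((|m₁' + m₂'| : ℤ) : ℚ) < (p : ℚ) / 2) :
    (Int.bmod (c₁ + c₂) p) % 2 = (m₁ + m₂) % 2 :=
  dghv_additively_homomorphic_general p m₁ m₂ m₁' m₂' q₁ q₂ c₁ c₂ hm₁' hm₂' hc₁ hc₂ hnoise
end

section
/- The integer-based (DGHV-style) scheme is multiplicatively homomorphic: let p be an odd integer with p ≥ 3, and for i = 1, 2 let cᵢ = mᵢ' + p·qᵢ with qᵢ ∈ ℤ, mᵢ' ∈ ℤ and mᵢ' ≡ mᵢ (mod 2) for messages mᵢ ∈ {0,1}. Then c₁·c₂ = m₁'·m₂' + p·(m₁'·q₂ + m₂'·q₁ + p·q₁·q₂), and if |m₁'·m₂'| < p/2, then ([c₁·c₂]_p) mod 2 = (m₁·m₂) mod 2. -/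
/-!
Expanding the product shows that `c₁ * c₂` is again a ciphertext, with noise `m₁' * m₂'`
and a multiple of `p` on top. Reduction to the symmetric residue kills the multiple of `p`
and returns the noise unchanged as long as it is smaller than `p / 2` in absolute value, and
the noise is congruent to `m₁ * m₂` modulo `2`.
-/

namespace Int

theorem bmod_eq_self_of_two_mul_abs_lt_s6 {x : ℤ} {n : ℕ} (h : 2 * |x| < n) : x.bmod n = x := by
  have := le_abs_self x
  have := neg_abs_le x
  exact bmod_eq_of_le (by omega) (by omega)

theorem bmod_add_mul_eq_of_two_mul_abs_lt {m : ℤ} {p : ℕ} (q : ℤ) (h : 2 * |m| < p) :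
    (m + p * q).bmod p = m := by
  rw [add_mul_bmod_self_left, bmod_eq_self_of_two_mul_abs_lt_s6 h]

end Int

theorem dghv_multiplicatively_homomorphic_general (p : ℕ)
    (m₁ m₂ m₁' m₂' q₁ q₂ c₁ c₂ : ℤ)
    (hm₁' : m₁' ≡ m₁ [ZMOD 2]) (hm₂' : m₂' ≡ m₂ [ZMOD 2])
    (hc₁ : c₁ = m₁' + (p : ℤ) * q₁) (hc₂ : c₂ = m₂' + (p : ℤ) * q₂) :
    c₁ * c₂ = m₁' * m₂' + (p : ℤ) * (m₁' * q₂ + m₂' * q₁ + (p : ℤ) * q₁ * q₂) ∧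
    (((|m₁' * m₂'| : ℤ) : ℚ) < (p : ℚ) / 2 →
      (Int.bmod (c₁ * c₂) p) % 2 = (m₁ * m₂) % 2) := by
  have hprod : c₁ * c₂ = m₁' * m₂' + (p : ℤ) * (m₁' * q₂ + m₂' * q₁ + (p : ℤ) * q₁ * q₂) := by
    subst hc₁ hc₂
    ring
  refine ⟨hprod, fun hsmall => ?_⟩
  have hnoise : 2 * |m₁' * m₂'| < (p : ℤ) := by
    have : ((2 * |m₁' * m₂'| : ℤ) : ℚ) < (p : ℚ) := by push_cast at hsmall ⊢; linarith
    exact_mod_cast this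
  rw [hprod, Int.bmod_add_mul_eq_of_two_mul_abs_lt _ hnoise]
  exact hm₁'.mul hm₂'

/-- The integer-based (DGHV-style) scheme is multiplicatively homomorphic: for
ciphertexts `cᵢ = mᵢ' + p·qᵢ` with `mᵢ' ≡ mᵢ (mod 2)`, the product satisfies
`c₁·c₂ = m₁'·m₂' + p·(m₁'·q₂ + m₂'·q₁ + p·q₁·q₂)`, and if `|m₁'·m₂'| < p/2` then
the decryption `([c₁·c₂]_p) mod 2` equals `(m₁·m₂) mod 2`.  Here `Int.bmod x p` is
the representative of `x` modulo `p` in the symmetric interval `[-p/2, p/2)`. -/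
theorem dghv_multiplicatively_homomorphic (p : ℕ) (hp_odd : Odd p) (hp : 3 ≤ p)
    (m₁ m₂ m₁' m₂' q₁ q₂ c₁ c₂ : ℤ)
    (hm₁ : m₁ = 0 ∨ m₁ = 1) (hm₂ : m₂ = 0 ∨ m₂ = 1)
    (hm₁' : m₁' ≡ m₁ [ZMOD 2]) (hm₂' : m₂' ≡ m₂ [ZMOD 2])
    (hc₁ : c₁ = m₁' + (p : ℤ) * q₁) (hc₂ : c₂ = m₂' + (p : ℤ) * q₂) :
    c₁ * c₂ = m₁' * m₂' + (p : ℤ) * (m₁' * q₂ + m₂' * q₁ + (p : ℤ) * q₁ * q₂) ∧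
    (((|m₁' * m₂'| : ℤ) : ℚ) < (p : ℚ) / 2 →
      (Int.bmod (c₁ * c₂) p) % 2 = (m₁ * m₂) % 2) :=
  dghv_multiplicatively_homomorphic_general p m₁ m₂ m₁' m₂' q₁ q₂ c₁ c₂ hm₁' hm₂' hc₁ hc₂
end

section
/- For any odd integer p ≥ 3 and any integer c, the decryption function of the integer-based scheme can be computed bitwise as ([c]_p) mod 2 = (c mod 2) XOR (⌊c/p⌉ mod 2); equivalently, [c]_p ≡ c + ⌊c/p⌉ (mod 2), where ⌊c/p⌉ denotes the integer nearest to c/p (which is unambiguous since p is odd, so c/p is never exactly halfway between two integers). -/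
/-
Nearest-integer rounding of `x / m` (ties up) is Lean's balanced quotient `Int.bdiv x m`, and
`Int.bmod x m = x - m * Int.bdiv x m`. For odd `m` the factor `m` is invisible modulo 2, so
`[x]_m ≡ x - ⌊x/m⌉ ≡ x + ⌊x/m⌉ (mod 2)`.
-/

namespace Int

theorem two_mul_add_ediv_two_mul_eq_bdiv (x : ℤ) {m : ℕ} (hm : 0 < m) :
    (2 * x + m) / (2 * m) = x.bdiv m := by
  have hlo := le_bmod (x := x) hm
  have hhi := bmod_lt (x := x) hm
  have hx := bmod_add_bdiv x m
  -- the remainder of `2 * x + m` modulo `2 * m` is `2 * bmod x m + m ∈ [0, 2 * m)`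
  refine ((Int.ediv_emod_unique (r := 2 * x.bmod m + m) (by omega)).2 ⟨?_, by omega, by omega⟩).1
  linear_combination 2 * hx

theorem round_intCast_div_natCast (x : ℤ) (m : ℕ) : round ((x : ℚ) / m) = x.bdiv m := by
  rcases Nat.eq_zero_or_pos m with rfl | hm
  · simp [bdiv]
  have hsum : (x : ℚ) / m + 1 / 2 = ((2 * x + m : ℤ) : ℚ) / ((2 * m : ℕ) : ℚ) := by
    push_cast
    field_simp
  rw [round_eq, hsum, Rat.floor_intCast_div_natCast, ← two_mul_add_ediv_two_mul_eq_bdiv x hm]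
  push_cast
  rfl

theorem bmod_modEq_add_bdiv (x : ℤ) {m : ℕ} (hm : Odd m) : x.bmod m ≡ x + x.bdiv m [ZMOD 2] := by
  obtain ⟨k, rfl⟩ := hm
  refine modEq_iff_dvd.2 ⟨(k + 1) * x.bdiv (2 * k + 1), ?_⟩
  have hx := bmod_add_bdiv x (2 * k + 1)
  push_cast at hx ⊢
  linear_combination -hx

end Int

theorem dghv_decryption_bitwise_general (p : ℕ) (hp_odd : Odd p) (c : ℤ) :
    (Int.bmod c p) % 2 = (c % 2 + (round ((c : ℚ) / (p : ℚ))) % 2) % 2 ∧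
    Int.bmod c p ≡ c + round ((c : ℚ) / (p : ℚ)) [ZMOD 2] := by
  have hmod : Int.bmod c p ≡ c + round ((c : ℚ) / (p : ℚ)) [ZMOD 2] := by
    rw [Int.round_intCast_div_natCast]
    exact Int.bmod_modEq_add_bdiv c hp_odd
  exact ⟨hmod.trans (Int.add_emod _ _ _), hmod⟩

/-- Bitwise form of the decryption function of the integer-based scheme: for odd
`p ≥ 3`, `([c]_p) mod 2 = LSB(c) XOR LSB(⌊c/p⌉)`, equivalently
`[c]_p ≡ c + ⌊c/p⌉ (mod 2)`.  Here `Int.bmod c p` is the representative of `c`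
modulo `p` in the symmetric interval `[-p/2, p/2)`, `round ((c:ℚ)/p)` is the
integer nearest to `c/p` (unambiguous since `p` is odd), and the XOR of the two
bits `c % 2` and `⌊c/p⌉ % 2` is their sum modulo 2. -/
theorem dghv_decryption_bitwise (p : ℕ) (hp_odd : Odd p) (hp : 3 ≤ p) (c : ℤ) :
    (Int.bmod c p) % 2 = (c % 2 + (round ((c : ℚ) / (p : ℚ))) % 2) % 2 ∧
    Int.bmod c p ≡ c + round ((c : ℚ) / (p : ℚ)) [ZMOD 2] :=
  dghv_decryption_bitwise_general p hp_odd c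
end

section
/- Decryption correctness of the BV* scheme: let q ≥ 2, A ∈ ℤ^{N×n}, t ∈ ℤⁿ, e ∈ ℤ^N, and let b ∈ ℤ^N satisfy b ≡ A·t + 2·e (mod q) entrywise. Let P = [b | −A] ∈ ℤ^{N×(n+1)} and s = (1, t) ∈ ℤ^{n+1}. For a message m ∈ {0,1}, a vector r ∈ {0,1}^N, and m̄ = (m, 0, …, 0) ∈ ℤ^{n+1}, the ciphertext c = Pᵀ·r + m̄ satisfies c · s ≡ m + 2·(e·r) (mod q); consequently, if |m + 2·(e·r)| < q/2, then ([c·s]_q) mod 2 = m. -/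
/-!
The secret key annihilates the public key up to the noise: `P s = b - A t ≡ 2 e (mod q)`.
Hence `c · s = m + r · (P s) ≡ m + 2 (e · r)`, and when the right-hand side already lies in the
symmetric range modulo `q` it *is* `[c · s]_q`, whose parity is `m`.
-/

open Matrix

theorem Int.bmod_eq_of_modEq_of_two_mul_abs_lt_s8 {x y : ℤ} {q : ℕ} (hxy : x ≡ y [ZMOD q])
    (hy : 2 * |y| < q) : x.bmod q = y := by
  have := neg_abs_le y
  have := le_abs_self y
  rw [Int.bmod_eq_iff (by omega)]
  exact ⟨by omega, by omega, hxy.dvd⟩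

theorem Int.dotProduct_modEq_dotProduct {ι : Type*} [Fintype ι] {q : ℤ} (r : ι → ℤ)
    {u v : ι → ℤ} (h : ∀ k, u k ≡ v k [ZMOD q]) : r ⬝ᵥ u ≡ r ⬝ᵥ v [ZMOD q] :=
  Int.ModEq.sum fun k _ => (h k).mul_left (r k)

namespace BVStar

variable {R : Type*} [CommRing R] {N n : ℕ}

def publicKey (b : Fin N → R) (A : Matrix (Fin N) (Fin n) R) : Matrix (Fin N) (Fin (n + 1)) R :=
  of fun k => Fin.cons (b k) (-A k)

def secretKey (t : Fin n → R) : Fin (n + 1) → R :=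
  Fin.cons 1 t

def encrypt (P : Matrix (Fin N) (Fin (n + 1)) R) (m : R) (r : Fin N → R) : Fin (n + 1) → R :=
  r ᵥ* P + Fin.cons m 0

theorem publicKey_mulVec_secretKey (b : Fin N → R) (A : Matrix (Fin N) (Fin n) R)
    (t : Fin n → R) : publicKey b A *ᵥ secretKey t = b - A *ᵥ t := by
  ext k
  simp [publicKey, secretKey, mulVec, dotProduct, Fin.sum_univ_succ, sub_eq_add_neg]

theorem encrypt_dotProduct_secretKey (P : Matrix (Fin N) (Fin (n + 1)) R) (m : R)
    (r : Fin N → R) (t : Fin n → R) :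
    encrypt P m r ⬝ᵥ secretKey t = m + r ⬝ᵥ (P *ᵥ secretKey t) := by
  rw [encrypt, add_dotProduct, ← dotProduct_mulVec]
  simp [secretKey, dotProduct, Fin.sum_univ_succ, add_comm]

end BVStar

open BVStar

theorem bv_star_decryption_correct_general (q : ℕ) (N n : ℕ)
    (A : Fin N → Fin n → ℤ) (t : Fin n → ℤ) (e b : Fin N → ℤ)
    (hb : ∀ k, b k ≡ (∑ j, A k j * t j) + 2 * e k [ZMOD (q : ℤ)])
    (m : ℤ) (hm : m = 0 ∨ m = 1)
    (r : Fin N → ℤ)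
    (c : Fin (n + 1) → ℤ)
    (hc : ∀ j, c j = (∑ k, (Fin.cons (b k) (fun j' => -A k j') : Fin (n + 1) → ℤ) j * r k)
      + (Fin.cons m (fun _ => 0) : Fin (n + 1) → ℤ) j) :
    (∑ j, c j * (Fin.cons 1 t : Fin (n + 1) → ℤ) j) ≡ m + 2 * ∑ k, e k * r k [ZMOD (q : ℤ)] ∧
    (((|m + 2 * ∑ k, e k * r k| : ℤ) : ℚ) < (q : ℚ) / 2 →
      (Int.bmod (∑ j, c j * (Fin.cons 1 t : Fin (n + 1) → ℤ) j) q) % 2 = m) := by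
  change c ⬝ᵥ secretKey t ≡ m + 2 * (e ⬝ᵥ r) [ZMOD q] ∧
    (((|m + 2 * (e ⬝ᵥ r)| : ℤ) : ℚ) < q / 2 → (c ⬝ᵥ secretKey t).bmod q % 2 = m)
  have hc' : c = encrypt (publicKey b (of A)) m r := by
    ext j
    rw [hc]
    simp only [encrypt, publicKey, vecMul, dotProduct, mul_comm, Pi.add_apply, of_apply]
    rfl
  have hnoise : ∀ k, (b - of A *ᵥ t) k ≡ (2 • e) k [ZMOD q] := fun k => by
    simpa [mulVec, dotProduct] using (hb k).sub_right (∑ j, A k j * t j)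
  have hdec : c ⬝ᵥ secretKey t ≡ m + 2 * (e ⬝ᵥ r) [ZMOD q] := by
    rw [hc', encrypt_dotProduct_secretKey, publicKey_mulVec_secretKey, dotProduct_comm e,
      ← smul_eq_mul, ← dotProduct_smul]
    exact (Int.dotProduct_modEq_dotProduct r hnoise).add_left m
  refine ⟨hdec, fun hsmall => ?_⟩
  have hsmall' : 2 * |m + 2 * (e ⬝ᵥ r)| < q := by
    rw [lt_div_iff₀ two_pos] at hsmall
    exact_mod_cast (mul_comm _ _).trans_lt hsmall
  rw [Int.bmod_eq_of_modEq_of_two_mul_abs_lt_s8 hdec hsmall']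
  omega

/-- Decryption correctness of the BV* scheme: with public key `P = [b ∣ -A]`
(whose `k`-th row is `Fin.cons (b k) (-A k)`), secret key `s = (1, t)`, and
ciphertext `c = Pᵀ·r + (m, 0, …, 0)`, we have `c·s ≡ m + 2·(e·r) (mod q)`;
consequently, if `|m + 2·(e·r)| < q/2`, then `([c·s]_q) mod 2 = m`.
Here `Int.bmod x q` is the representative of `x` modulo `q` in the symmetric
interval `[-q/2, q/2)`. -/
theorem bv_star_decryption_correct (q : ℕ) (hq : 2 ≤ q) (N n : ℕ)
    (A : Fin N → Fin n → ℤ) (t : Fin n → ℤ) (e b : Fin N → ℤ)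
    (hb : ∀ k, b k ≡ (∑ j, A k j * t j) + 2 * e k [ZMOD (q : ℤ)])
    (m : ℤ) (hm : m = 0 ∨ m = 1)
    (r : Fin N → ℤ) (hr : ∀ k, r k = 0 ∨ r k = 1)
    (c : Fin (n + 1) → ℤ)
    (hc : ∀ j, c j = (∑ k, (Fin.cons (b k) (fun j' => -A k j') : Fin (n + 1) → ℤ) j * r k)
      + (Fin.cons m (fun _ => 0) : Fin (n + 1) → ℤ) j) :
    (∑ j, c j * (Fin.cons 1 t : Fin (n + 1) → ℤ) j) ≡ m + 2 * ∑ k, e k * r k [ZMOD (q : ℤ)] ∧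
    (((|m + 2 * ∑ k, e k * r k| : ℤ) : ℚ) < (q : ℚ) / 2 →
      (Int.bmod (∑ j, c j * (Fin.cons 1 t : Fin (n + 1) → ℤ) j) q) % 2 = m) :=
  bv_star_decryption_correct_general q N n A t e b hb m hm r c hc
end

section
/- Correctness of relinearized homomorphic multiplication in the BV* scheme: let q ≥ 2, let K be a finite index set, and for each k ∈ K let h_k ∈ {0,1}, a_k ∈ ℤⁿ, e_k ∈ ℤ, d_k ∈ ℤ, and let t' ∈ ℤⁿ and b_k ∈ ℤ satisfy b_k ≡ a_k·t' + 2·e_k + d_k (mod q). Suppose m₁, m₂ ∈ {0,1} and e₁, e₂ ∈ ℤ satisfy Σ_{k∈K} h_k·d_k ≡ (m₁ + 2e₁)·(m₂ + 2e₂) (mod q). Then Σ_{k∈K} h_k·b_k − (Σ_{k∈K} h_k·a_k)·t' ≡ m₁·m₂ + 2·(m₁·e₂ + m₂·e₁ + 2·e₁·e₂ + Σ_{k∈K} h_k·e_k) (mod q). -/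
/-- Correctness of relinearized homomorphic multiplication in the BV* scheme:
given evaluation-key entries `b k ≡ a k · t' + 2·e k + d k (mod q)` and bits
`h k ∈ {0,1}` whose combination satisfies `∑ h k · d k ≡ (m₁+2e₁)·(m₂+2e₂) (mod q)`,
the relinearized ciphertext `(∑ h k · b k, ∑ h k · a k)` decrypts under `(1, t')` to
`m₁·m₂` plus twice a noise term. -/
theorem bv_star_relinearized_mult_correct (q : ℕ) (hq : 2 ≤ q) (n : ℕ)
    (K : Type) [Fintype K]
    (h : K → ℤ) (hh : ∀ k, h k = 0 ∨ h k = 1)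
    (a : K → Fin n → ℤ) (e d : K → ℤ) (t' : Fin n → ℤ) (b : K → ℤ)
    (hb : ∀ k, b k ≡ (∑ j, a k j * t' j) + 2 * e k + d k [ZMOD (q : ℤ)])
    (m₁ m₂ e₁ e₂ : ℤ)
    (hm₁ : m₁ = 0 ∨ m₁ = 1) (hm₂ : m₂ = 0 ∨ m₂ = 1)
    (hsum : (∑ k, h k * d k) ≡ (m₁ + 2 * e₁) * (m₂ + 2 * e₂) [ZMOD (q : ℤ)]) :
    (∑ k, h k * b k) - (∑ j, (∑ k, h k * a k j) * t' j)
      ≡ m₁ * m₂ + 2 * (m₁ * e₂ + m₂ * e₁ + 2 * e₁ * e₂ + ∑ k, h k * e k) [ZMOD (q : ℤ)] := by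
  rw [← ZMod.intCast_eq_intCast_iff] at hsum ⊢
  replace hb := fun k => (ZMod.intCast_eq_intCast_iff _ _ _).mpr (hb k)
  push_cast at hsum hb ⊢
  simp only [hb, mul_add, Finset.sum_add_distrib, Finset.mul_sum, Finset.sum_mul, mul_assoc]
  rw [Finset.sum_comm (γ := Fin n)]
  simp only [show ∀ k : K, (h k : ZMod q) * (2 * (e k : ZMod q)) = 2 * ((h k : ZMod q) * (e k : ZMod q)) from fun k => by ring]
  linear_combination hsum
end

section
/- Correctness and noise growth of BFV homomorphic addition: let n ≥ 1, q > t ≥ 2, Δ = ⌊q/t⌋ and r_t(q) = q − t·Δ, and work in R = ℤ[x]/(xⁿ+1). Suppose that for i = 1, 2, the ciphertexts (uᵢ, vᵢ) satisfy uᵢ + vᵢ·s ≡ Δ·mᵢ + eᵢ' (mod q) with ‖mᵢ‖ ≤ t/2, and write m₁ + m₂ = [m₁+m₂]_t + t·r_t coefficientwise. Then r_t has integer coefficients with ‖r_t‖ ≤ 1, and (u₁+u₂) + (v₁+v₂)·s ≡ Δ·[m₁+m₂]_t + (e₁' + e₂' − r_t(q)·r_t) (mod q), with the new noise bounded by ‖e₁'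 + e₂' − r_t(q)·r_t‖ ≤ ‖e₁'‖ + ‖e₂'‖ + t; i.e. homomorphic addition increases the noise by at most an additive factor of t. -/
/-!
Adding the two decryption congruences gives `Δ·(m₁ + m₂) = Δ·[m₁ + m₂]_t + Δ·t·r_t`, and
`Δ·t = q - r_t(q) ≡ -r_t(q) (mod q)`, so the carry `r_t` moves into the noise as `-r_t(q)·r_t`.
Since `|m₁ + m₂| ≤ t` and the symmetric remainder is at most `t/2` in size, every coefficient
of the carry is `-1`, `0` or `1`, and the extra noise is at most `r_t(q) < t`.
-/

open Polynomial

/-- The sup-norm (maximum absolute value of the coefficients of index `< n`) of an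
integer polynomial, as a real number. -/
noncomputable def pnormZ (n : ℕ) (f : Polynomial ℤ) : ℝ :=
  ⨆ i : Fin n, |((f.coeff (i : ℕ) : ℤ) : ℝ)|

/-- Coefficientwise symmetric reduction modulo `t`: every coefficient is replaced by
its representative in the symmetric interval `[-t/2, t/2)`.  This is `[f]_t`. -/
noncomputable def symRed (t : ℕ) (f : Polynomial ℤ) : Polynomial ℤ :=
  f.sum fun i a => Polynomial.C (Int.bmod a t) * Polynomial.X ^ i

lemma symRed_coeff (t : ℕ) (f : ℤ[X]) (k : ℕ) :
    (symRed t f).coeff k = Int.bmod (f.coeff k) t := by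
  classical
  simp only [symRed, Polynomial.sum, finsetSum_coeff, coeff_C_mul, coeff_X_pow, mul_ite,
    mul_one, mul_zero, Finset.sum_ite_eq]
  split_ifs with hk
  · rfl
  · simp [notMem_support_iff.mp hk]

lemma abs_le_one_of_eq_bmod_add_mul {x r : ℤ} {t : ℕ} (ht : 0 < t) (hx : |x| ≤ t)
    (h : x = x.bmod t + t * r) : |r| ≤ 1 := by
  have hlo := Int.le_bmod (x := x) ht
  have hhi := Int.bmod_lt (x := x) ht
  have hcarry : |(t : ℤ) * r| < t * 2 := by
    rw [abs_lt]; constructor <;> cases abs_le.mp hx <;> omega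
  rw [abs_mul, Nat.abs_cast] at hcarry
  have := lt_of_mul_lt_mul_left hcarry (Nat.cast_nonneg t)
  omega

section pnormZ

variable {n : ℕ}

lemma abs_coeff_le_pnormZ (f : ℤ[X]) (i : Fin n) : |(f.coeff i : ℝ)| ≤ pnormZ n f :=
  le_ciSup (f := fun j : Fin n => |(f.coeff j : ℝ)|) (Set.finite_range _).bddAbove i

lemma pnormZ_nonneg (f : ℤ[X]) : 0 ≤ pnormZ n f :=
  Real.iSup_nonneg fun _ => abs_nonneg _

lemma pnormZ_le {f : ℤ[X]} {B : ℝ} (hB : 0 ≤ B) (h : ∀ i : Fin n, |(f.coeff i : ℝ)| ≤ B) :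
    pnormZ n f ≤ B :=
  Real.iSup_le h hB

lemma pnormZ_add_le (f g : ℤ[X]) : pnormZ n (f + g) ≤ pnormZ n f + pnormZ n g :=
  pnormZ_le (add_nonneg (pnormZ_nonneg f) (pnormZ_nonneg g)) fun i => by
    rw [coeff_add, Int.cast_add]
    exact (abs_add_le _ _).trans
      (add_le_add (abs_coeff_le_pnormZ f i) (abs_coeff_le_pnormZ g i))

lemma pnormZ_sub_le (f g : ℤ[X]) : pnormZ n (f - g) ≤ pnormZ n f + pnormZ n g :=
  pnormZ_le (add_nonneg (pnormZ_nonneg f) (pnormZ_nonneg g)) fun i => by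
    rw [coeff_sub, Int.cast_sub]
    exact (abs_sub _ _).trans
      (add_le_add (abs_coeff_le_pnormZ f i) (abs_coeff_le_pnormZ g i))

lemma pnormZ_C_mul_le (c : ℤ) (f : ℤ[X]) : pnormZ n (C c * f) ≤ |(c : ℝ)| * pnormZ n f :=
  pnormZ_le (mul_nonneg (abs_nonneg _) (pnormZ_nonneg f)) fun i => by
    rw [coeff_C_mul, Int.cast_mul, abs_mul]
    exact mul_le_mul_of_nonneg_left (abs_coeff_le_pnormZ f i) (abs_nonneg _)

lemma pnormZ_le_one_of_eq_symRed_add {t : ℕ} (ht : 0 < t) {m r : ℤ[X]}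
    (hm : pnormZ n m ≤ t) (h : m = symRed t m + C (t : ℤ) * r) : pnormZ n r ≤ 1 :=
  pnormZ_le zero_le_one fun i => by
    have hcoeff := congrArg (coeff · i) h
    simp only [coeff_add, coeff_C_mul, symRed_coeff] at hcoeff
    have hmi : |m.coeff i| ≤ t := by
      exact_mod_cast (abs_coeff_le_pnormZ m i).trans hm
    exact_mod_cast abs_le_one_of_eq_bmod_add_mul ht hmi hcoeff

end pnormZ

lemma dvd_add_sub_of_add_eq_add_mul {R : Type*} [CommRing R]
    {q Δ t ρ a₁ a₂ m₁ m₂ m e₁ e₂ r : R} (hq : q = t * Δ + ρ) (hm : m₁ + m₂ = m + t * r)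
    (h₁ : q ∣ a₁ - (Δ * m₁ + e₁)) (h₂ : q ∣ a₂ - (Δ * m₂ + e₂)) :
    q ∣ a₁ + a₂ - (Δ * m + (e₁ + e₂ - ρ * r)) := by
  have hsplit : a₁ + a₂ - (Δ * m + (e₁ + e₂ - ρ * r))
      = (a₁ - (Δ * m₁ + e₁)) + (a₂ - (Δ * m₂ + e₂)) + q * r := by
    linear_combination Δ * hm - r * hq
  rw [hsplit]
  exact dvd_add (dvd_add h₁ h₂) (dvd_mul_right q r)

theorem bfv_addition_correct_general (n : ℕ) (q t : ℕ) (ht : 2 ≤ t)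
    (Δ rtq : ℕ) (hΔ : Δ = q / t) (hrtq : rtq = q - t * Δ)
    (φ : Polynomial ℤ →+* AdjoinRoot ((X : Polynomial ℤ) ^ n + 1))
    (s u₁ v₁ u₂ v₂ m₁ m₂ e₁' e₂' rt : Polynomial ℤ)
    (hnm₁ : pnormZ n m₁ ≤ (t : ℝ) / 2) (hnm₂ : pnormZ n m₂ ≤ (t : ℝ) / 2)
    (hdec₁ : (q : AdjoinRoot ((X : Polynomial ℤ) ^ n + 1)) ∣
      (φ u₁ + φ v₁ * φ s - ((Δ : AdjoinRoot ((X : Polynomial ℤ) ^ n + 1)) * φ m₁ + φ e₁')))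
    (hdec₂ : (q : AdjoinRoot ((X : Polynomial ℤ) ^ n + 1)) ∣
      (φ u₂ + φ v₂ * φ s - ((Δ : AdjoinRoot ((X : Polynomial ℤ) ^ n + 1)) * φ m₂ + φ e₂')))
    (hrt : m₁ + m₂ = symRed t (m₁ + m₂) + Polynomial.C (t : ℤ) * rt) :
    pnormZ n rt ≤ 1 ∧
    (q : AdjoinRoot ((X : Polynomial ℤ) ^ n + 1)) ∣
      (φ (u₁ + u₂) + φ (v₁ + v₂) * φ s
        - ((Δ : AdjoinRoot ((X : Polynomial ℤ) ^ n + 1)) * φ (symRed t (m₁ + m₂))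
          + φ (e₁' + e₂' - Polynomial.C (rtq : ℤ) * rt))) ∧
    pnormZ n (e₁' + e₂' - Polynomial.C (rtq : ℤ) * rt)
      ≤ pnormZ n e₁' + pnormZ n e₂' + t := by
  obtain rfl : rtq = q % t := by rw [hrtq, hΔ, Nat.mod_eq_sub_mul_div]
  subst hΔ
  have hcarry : pnormZ n rt ≤ 1 :=
    pnormZ_le_one_of_eq_symRed_add (by omega)
      ((pnormZ_add_le m₁ m₂).trans (by linarith)) hrt
  refine ⟨hcarry, ?_, ?_⟩
  · have hq : (q : AdjoinRoot (X ^ n + 1 : ℤ[X])) = t * (q / t : ℕ) + (q % t : ℕ) := by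
      rw [← Nat.cast_mul, ← Nat.cast_add, Nat.div_add_mod]
    have hC (k : ℕ) : φ (C (k : ℤ)) = k := by simp
    have hm := congrArg φ hrt
    simp only [map_add, map_mul, map_sub, hC] at hm ⊢
    convert dvd_add_sub_of_add_eq_add_mul hq hm hdec₁ hdec₂ using 2
    ring
  · have hrtq_le : |(((q % t : ℕ) : ℤ) : ℝ)| ≤ t := by
      rw [Int.cast_natCast, Nat.abs_cast]
      exact_mod_cast (Nat.mod_lt q (by omega)).le
    calc pnormZ n (e₁' + e₂' - C ((q % t : ℕ) : ℤ) * rt)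
        ≤ pnormZ n e₁' + pnormZ n e₂' + |(((q % t : ℕ) : ℤ) : ℝ)| * pnormZ n rt :=
          (pnormZ_sub_le _ _).trans (add_le_add (pnormZ_add_le _ _) (pnormZ_C_mul_le _ _))
      _ ≤ pnormZ n e₁' + pnormZ n e₂' + t := by
          linarith [mul_le_mul hrtq_le hcarry (pnormZ_nonneg rt) (Nat.cast_nonneg t)]

/-- Correctness and noise growth of BFV homomorphic addition in `R = ℤ[x]/(xⁿ+1)`:
if `uᵢ + vᵢ·s ≡ Δ·mᵢ + eᵢ' (mod q)` with `‖mᵢ‖ ≤ t/2`, and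
`m₁ + m₂ = [m₁+m₂]_t + t·r_t` coefficientwise, then `‖r_t‖ ≤ 1`,
`(u₁+u₂) + (v₁+v₂)·s ≡ Δ·[m₁+m₂]_t + (e₁' + e₂' - r_t(q)·r_t) (mod q)`, and
`‖e₁' + e₂' - r_t(q)·r_t‖ ≤ ‖e₁'‖ + ‖e₂'‖ + t`, where `Δ = ⌊q/t⌋` and
`r_t(q) = q - t·Δ`.  Congruence modulo `q` in `R` is expressed through the quotient
map `φ : ℤ[x] → ℤ[x]/(xⁿ+1)` as divisibility by `(q : R)`. -/
theorem bfv_addition_correct (n : ℕ) (hn : 1 ≤ n) (q t : ℕ) (ht : 2 ≤ t) (htq : t < q)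
    (Δ rtq : ℕ) (hΔ : Δ = q / t) (hrtq : rtq = q - t * Δ)
    (φ : Polynomial ℤ →+* AdjoinRoot ((X : Polynomial ℤ) ^ n + 1))
    (hφ : φ = AdjoinRoot.mk ((X : Polynomial ℤ) ^ n + 1))
    (s u₁ v₁ u₂ v₂ m₁ m₂ e₁' e₂' rt : Polynomial ℤ)
    (hdm₁ : m₁.degree < (n : WithBot ℕ)) (hdm₂ : m₂.degree < (n : WithBot ℕ))
    (hnm₁ : pnormZ n m₁ ≤ (t : ℝ) / 2) (hnm₂ : pnormZ n m₂ ≤ (t : ℝ) / 2)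
    (hdec₁ : (q : AdjoinRoot ((X : Polynomial ℤ) ^ n + 1)) ∣
      (φ u₁ + φ v₁ * φ s - ((Δ : AdjoinRoot ((X : Polynomial ℤ) ^ n + 1)) * φ m₁ + φ e₁')))
    (hdec₂ : (q : AdjoinRoot ((X : Polynomial ℤ) ^ n + 1)) ∣
      (φ u₂ + φ v₂ * φ s - ((Δ : AdjoinRoot ((X : Polynomial ℤ) ^ n + 1)) * φ m₂ + φ e₂')))
    (hrt : m₁ + m₂ = symRed t (m₁ + m₂) + Polynomial.C (t : ℤ) * rt) :
    pnormZ n rt ≤ 1 ∧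
    (q : AdjoinRoot ((X : Polynomial ℤ) ^ n + 1)) ∣
      (φ (u₁ + u₂) + φ (v₁ + v₂) * φ s
        - ((Δ : AdjoinRoot ((X : Polynomial ℤ) ^ n + 1)) * φ (symRed t (m₁ + m₂))
          + φ (e₁' + e₂' - Polynomial.C (rtq : ℤ) * rt))) ∧
    pnormZ n (e₁' + e₂' - Polynomial.C (rtq : ℤ) * rt)
      ≤ pnormZ n e₁' + pnormZ n e₂' + t :=
  bfv_addition_correct_general n q t ht Δ rtq hΔ hrtq φ s u₁ v₁ u₂ v₂ m₁ m₂ e₁' e₂' rt hnm₁ hnm₂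
    hdec₁ hdec₂ hrt
end

section
/- BFV multiplication rounding-error bound: let n ≥ 1, q > t ≥ 2, work in R = ℤ[x]/(xⁿ+1), and let δ ≥ 0 be an expansion bound valid for polynomials with real coefficients modulo xⁿ+1. For h₀, h₁, h₂, s ∈ R, define the rounding error r_a = ((t/q)·h₀ − ⌊(t/q)·h₀⌉) + ((t/q)·h₁ − ⌊(t/q)·h₁⌉)·s + ((t/q)·h₂ − ⌊(t/q)·h₂⌉)·s², where ⌊·⌉ rounds each coefficient to the nearest integer. Then ‖r_a‖ ≤ 1/2 + (δ/2)·‖s‖ + (δ²/2)·‖s‖², and in particular ‖r_a‖ ≤ (1/2)·(1 + δ·‖s‖)². -/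
open Polynomial

/-- The sup-norm (maximum absolute value of the coefficients of index `< n`) of a
real polynomial. -/
noncomputable def pnormR (n : ℕ) (f : Polynomial ℝ) : ℝ :=
  ⨆ i : Fin n, |f.coeff (i : ℕ)|

/-- Coefficientwise rounding to the nearest integer, `⌊·⌉`. -/
noncomputable def roundPoly (f : Polynomial ℝ) : Polynomial ℝ :=
  f.sum fun i a => Polynomial.C ((round a : ℤ) : ℝ) * Polynomial.X ^ i

/-- The inclusion `ℤ[x] → ℝ[x]`. -/
noncomputable def toR : Polynomial ℤ →+* Polynomial ℝ :=
  Polynomial.mapRingHom (Int.castRingHom ℝ)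

/-!
Each rounding error `f - ⌊f⌉` has coefficients of absolute value at most `1/2`. By the triangle
inequality `‖r_a‖` is at most `1/2` plus the norms of the two reduced products; the expansion bound
gives `δ · (1/2) · ‖s‖` for the first, and, applied twice (once to `s²` reduced modulo `xⁿ+1`),
`δ · (1/2) · δ‖s‖²` for the second. The second form follows since `δ‖s‖ ≥ 0`.
-/

def IsExpansionBound (n : ℕ) (δ : ℝ) : Prop :=
  ∀ a b : ℝ[X], a.degree < n → b.degree < n →
    pnormR n ((a * b) %ₘ ((X : ℝ[X]) ^ n + 1)) ≤ δ * pnormR n a * pnormR n b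

lemma roundPoly_coeff (f : ℝ[X]) (k : ℕ) :
    (roundPoly f).coeff k = ((round (f.coeff k) : ℤ) : ℝ) := by
  rw [roundPoly, sum_def, finsetSum_coeff]
  simp only [coeff_C_mul, coeff_X_pow, mul_ite, mul_one, mul_zero, Finset.sum_ite_eq]
  split_ifs with h
  · rfl
  · simp [notMem_support_iff.mp h]

lemma degree_sub_roundPoly_lt {f : ℝ[X]} {n : ℕ} (hf : f.degree < n) :
    (f - roundPoly f).degree < n := by
  rw [degree_lt_iff_coeff_zero] at hf ⊢
  intro m hm
  simp [roundPoly_coeff, hf m hm]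

lemma degree_C_mul_toR_le (c : ℝ) (h : ℤ[X]) : (C c * toR h).degree ≤ h.degree :=
  smul_eq_C_mul c ▸ (degree_smul_le c _).trans degree_map_le

lemma degree_modByMonic_X_pow_add_one_lt {n : ℕ} (hn : n ≠ 0) (p : ℝ[X]) :
    (p %ₘ ((X : ℝ[X]) ^ n + 1)).degree < n := by
  have hmonic : ((X : ℝ[X]) ^ n + 1).Monic := by
    simpa using monic_X_pow_add_C (1 : ℝ) hn
  have hdeg : ((X : ℝ[X]) ^ n + 1).degree = n := by
    simpa using degree_X_pow_add_C (Nat.pos_of_ne_zero hn) (1 : ℝ)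
  exact hdeg ▸ degree_modByMonic_lt p hmonic

section pnormR

variable (n : ℕ)

lemma pnormR_nonneg (f : ℝ[X]) : 0 ≤ pnormR n f :=
  Real.iSup_nonneg fun _ => abs_nonneg _

lemma abs_coeff_le_pnormR (f : ℝ[X]) (i : Fin n) : |f.coeff i| ≤ pnormR n f :=
  le_ciSup (f := fun i : Fin n => |f.coeff i|) (Set.finite_range _).bddAbove i

variable {n}

/-- The hypothesis `0 ≤ c` covers `n = 0`, where the supremum over `Fin 0` is `0`. -/
lemma pnormR_le {f : ℝ[X]} {c : ℝ} (hc : 0 ≤ c) (h : ∀ i : Fin n, |f.coeff i| ≤ c) :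
    pnormR n f ≤ c :=
  Real.iSup_le h hc

lemma pnormR_add_le (f g : ℝ[X]) : pnormR n (f + g) ≤ pnormR n f + pnormR n g :=
  pnormR_le (add_nonneg (pnormR_nonneg n f) (pnormR_nonneg n g)) fun i =>
    (coeff_add f g i ▸ abs_add_le _ _).trans
      (add_le_add (abs_coeff_le_pnormR n f i) (abs_coeff_le_pnormR n g i))

lemma pnormR_sub_roundPoly_le (f : ℝ[X]) : pnormR n (f - roundPoly f) ≤ 1 / 2 :=
  pnormR_le (by norm_num) fun i => by
    rw [coeff_sub, roundPoly_coeff]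
    exact abs_sub_round _

lemma IsExpansionBound.pnormR_mul_modByMonic_le {δ A B : ℝ} (hδ : IsExpansionBound n δ)
    (hδ0 : 0 ≤ δ) {a b : ℝ[X]} (ha : a.degree < n) (hb : b.degree < n)
    (hA : pnormR n a ≤ A) (hB : pnormR n b ≤ B) :
    pnormR n ((a * b) %ₘ ((X : ℝ[X]) ^ n + 1)) ≤ δ * A * B :=
  (hδ a b ha hb).trans <| mul_le_mul (mul_le_mul_of_nonneg_left hA hδ0) hB
    (pnormR_nonneg n b) (mul_nonneg hδ0 ((pnormR_nonneg n a).trans hA))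

end pnormR

theorem bfv_mult_rounding_error_bound_general (n : ℕ) (hn : 1 ≤ n) (q t : ℕ)
    (δ : ℝ) (hδ0 : 0 ≤ δ)
    (hδ : ∀ a b : Polynomial ℝ, a.degree < (n : WithBot ℕ) → b.degree < (n : WithBot ℕ) →
      pnormR n ((a * b) %ₘ ((X : Polynomial ℝ) ^ n + 1)) ≤ δ * pnormR n a * pnormR n b)
    (h₀ h₁ h₂ s : Polynomial ℤ)
    (hd₁ : h₁.degree < (n : WithBot ℕ))
    (hd₂ : h₂.degree < (n : WithBot ℕ)) (hds : s.degree < (n : WithBot ℕ))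
    (ra : Polynomial ℝ)
    (hra : ra =
      (Polynomial.C ((t : ℝ) / (q : ℝ)) * toR h₀
        - roundPoly (Polynomial.C ((t : ℝ) / (q : ℝ)) * toR h₀))
      + ((Polynomial.C ((t : ℝ) / (q : ℝ)) * toR h₁
        - roundPoly (Polynomial.C ((t : ℝ) / (q : ℝ)) * toR h₁)) * toR s)
          %ₘ ((X : Polynomial ℝ) ^ n + 1)
      + ((Polynomial.C ((t : ℝ) / (q : ℝ)) * toR h₂
        - roundPoly (Polynomial.C ((t : ℝ) / (q : ℝ)) * toR h₂))
          * ((toR s * toR s) %ₘ ((X : Polynomial ℝ) ^ n + 1)))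
          %ₘ ((X : Polynomial ℝ) ^ n + 1)) :
    pnormR n ra ≤ 1 / 2 + δ / 2 * pnormR n (toR s) + δ ^ 2 / 2 * (pnormR n (toR s)) ^ 2 ∧
    pnormR n ra ≤ 1 / 2 * (1 + δ * pnormR n (toR s)) ^ 2 := by
  have hδ : IsExpansionBound n δ := hδ
  set N := pnormR n (toR s)
  have hs : (toR s).degree < n := degree_map_le.trans_lt hds
  have herr {h : ℤ[X]} (hd : h.degree < n) :
      (C ((t : ℝ) / q) * toR h - roundPoly (C ((t : ℝ) / q) * toR h)).degree < n :=
    degree_sub_roundPoly_lt ((degree_C_mul_toR_le _ h).trans_lt hd)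
  have hsq : pnormR n ((toR s * toR s) %ₘ ((X : ℝ[X]) ^ n + 1)) ≤ δ * N * N :=
    hδ _ _ hs hs
  have hbound : pnormR n ra ≤ 1 / 2 + δ * (1 / 2) * N + δ * (1 / 2) * (δ * N * N) := by
    rw [hra]
    refine (pnormR_add_le _ _).trans (add_le_add ((pnormR_add_le _ _).trans
      (add_le_add (pnormR_sub_roundPoly_le _) ?_)) ?_)
    · exact hδ.pnormR_mul_modByMonic_le hδ0 (herr hd₁) hs (pnormR_sub_roundPoly_le _) le_rfl
    · exact hδ.pnormR_mul_modByMonic_le hδ0 (herr hd₂)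
        (degree_modByMonic_X_pow_add_one_lt (by omega) _) (pnormR_sub_roundPoly_le _) hsq
  have hδN : 0 ≤ δ * N := mul_nonneg hδ0 (pnormR_nonneg n _)
  exact ⟨hbound.trans_eq (by ring), hbound.trans (by nlinarith)⟩

/-- BFV multiplication rounding-error bound: with `δ` an expansion bound for real
polynomials modulo `xⁿ+1`, the rounding error
`r_a = ((t/q)·h₀ - ⌊(t/q)·h₀⌉) + ((t/q)·h₁ - ⌊(t/q)·h₁⌉)·s + ((t/q)·h₂ - ⌊(t/q)·h₂⌉)·s²`
(products reduced modulo `xⁿ+1`) satisfies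
`‖r_a‖ ≤ 1/2 + (δ/2)·‖s‖ + (δ²/2)·‖s‖²` and `‖r_a‖ ≤ (1/2)·(1 + δ·‖s‖)²`. -/
theorem bfv_mult_rounding_error_bound (n : ℕ) (hn : 1 ≤ n) (q t : ℕ) (ht : 2 ≤ t) (htq : t < q)
    (δ : ℝ) (hδ0 : 0 ≤ δ)
    (hδ : ∀ a b : Polynomial ℝ, a.degree < (n : WithBot ℕ) → b.degree < (n : WithBot ℕ) →
      pnormR n ((a * b) %ₘ ((X : Polynomial ℝ) ^ n + 1)) ≤ δ * pnormR n a * pnormR n b)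
    (h₀ h₁ h₂ s : Polynomial ℤ)
    (hd₀ : h₀.degree < (n : WithBot ℕ)) (hd₁ : h₁.degree < (n : WithBot ℕ))
    (hd₂ : h₂.degree < (n : WithBot ℕ)) (hds : s.degree < (n : WithBot ℕ))
    (ra : Polynomial ℝ)
    (hra : ra =
      (Polynomial.C ((t : ℝ) / (q : ℝ)) * toR h₀
        - roundPoly (Polynomial.C ((t : ℝ) / (q : ℝ)) * toR h₀))
      + ((Polynomial.C ((t : ℝ) / (q : ℝ)) * toR h₁
        - roundPoly (Polynomial.C ((t : ℝ) / (q : ℝ)) * toR h₁)) * toR s)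
          %ₘ ((X : Polynomial ℝ) ^ n + 1)
      + ((Polynomial.C ((t : ℝ) / (q : ℝ)) * toR h₂
        - roundPoly (Polynomial.C ((t : ℝ) / (q : ℝ)) * toR h₂))
          * ((toR s * toR s) %ₘ ((X : Polynomial ℝ) ^ n + 1)))
          %ₘ ((X : Polynomial ℝ) ^ n + 1)) :
    pnormR n ra ≤ 1 / 2 + δ / 2 * pnormR n (toR s) + δ ^ 2 / 2 * (pnormR n (toR s)) ^ 2 ∧
    pnormR n ra ≤ 1 / 2 * (1 + δ * pnormR n (toR s)) ^ 2 :=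
  bfv_mult_rounding_error_bound_general n hn q t δ hδ0 hδ h₀ h₁ h₂ s hd₁ hd₂ hds ra hra
end

section
/- Correctness of BFV relinearization (version 1): let q ≥ 2, T ≥ 2 and l ≥ 0 be integers and work in R = ℤ[x]/(xⁿ+1). Let s, h₀, h₁, h₂ ∈ R, and for τ = 0, …, l let a_τ, e_τ, h₂^{(τ)} ∈ R satisfy b_τ ≡ −(a_τ·s + e_τ) + T^τ·s² (mod q) and h₂ ≡ Σ_{τ=0}^{l} T^τ·h₂^{(τ)} (mod q). Then the relinearized pair h₀' = h₀ + Σ_{τ=0}^{l} b_τ·h₂^{(τ)} and h₁' = h₁ + Σ_{τ=0}^{l} a_τ·h₂^{(τ)} satisfies h₀' + h₁'·s ≡ h₀ + h₁·s + h₂·s² − Σ_{τ=0}^{l} h₂^{(τ)}·e_τ (mod q). -/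
open Polynomial

/-! Substituting the key congruence into `∑ b_τ·h₂^{(τ)}` turns `h₀' + h₁'·s` into
`h₀ + h₁·s + (∑ T^τ·h₂^{(τ)})·s² - ∑ h₂^{(τ)}·e_τ`, and the gadget decomposition replaces
`∑ T^τ·h₂^{(τ)}` by `h₂`; each replacement changes the difference by a multiple of `q`. -/

section Relinearization

variable {R ι : Type*} [CommRing R] [Fintype ι]

theorem relinearize_sub_eq (s h₀ h₁ h₂ : R) (w a e b d : ι → R) :
    (h₀ + ∑ τ, b τ * d τ) + (h₁ + ∑ τ, a τ * d τ) * s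
        - (h₀ + h₁ * s + h₂ * s ^ 2 - ∑ τ, d τ * e τ)
      = ∑ τ, (b τ - (-(a τ * s + e τ) + w τ * s ^ 2)) * d τ
        - (h₂ - ∑ τ, w τ * d τ) * s ^ 2 := by
  have expand : ∀ τ, (b τ - (-(a τ * s + e τ) + w τ * s ^ 2)) * d τ
      = b τ * d τ + a τ * d τ * s + d τ * e τ - w τ * d τ * s ^ 2 := fun τ => by ring
  simp only [expand, Finset.sum_sub_distrib, Finset.sum_add_distrib, ← Finset.sum_mul]
  ring

theorem dvd_relinearize_sub {q s h₀ h₁ h₂ : R} {w a e b d : ι → R}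
    (hb : ∀ τ, q ∣ b τ - (-(a τ * s + e τ) + w τ * s ^ 2))
    (hh₂ : q ∣ h₂ - ∑ τ, w τ * d τ) :
    q ∣ (h₀ + ∑ τ, b τ * d τ) + (h₁ + ∑ τ, a τ * d τ) * s
        - (h₀ + h₁ * s + h₂ * s ^ 2 - ∑ τ, d τ * e τ) := by
  rw [relinearize_sub_eq s h₀ h₁ h₂ w]
  exact dvd_sub (Finset.dvd_sum fun τ _ => (hb τ).mul_right _) (hh₂.mul_right _)

end Relinearization

theorem bfv_relinearization_v1_correct_general (n : ℕ) (q T l : ℕ)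
    (s h₀ h₁ h₂ : AdjoinRoot ((X : Polynomial ℤ) ^ n + 1))
    (a e h₂' b : Fin (l + 1) → AdjoinRoot ((X : Polynomial ℤ) ^ n + 1))
    (hb : ∀ τ, (q : AdjoinRoot ((X : Polynomial ℤ) ^ n + 1)) ∣
      (b τ - (-(a τ * s + e τ)
        + (T : AdjoinRoot ((X : Polynomial ℤ) ^ n + 1)) ^ (τ : ℕ) * s ^ 2)))
    (hh₂ : (q : AdjoinRoot ((X : Polynomial ℤ) ^ n + 1)) ∣
      (h₂ - ∑ τ : Fin (l + 1), (T : AdjoinRoot ((X : Polynomial ℤ) ^ n + 1)) ^ (τ : ℕ) * h₂' τ)) :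
    (q : AdjoinRoot ((X : Polynomial ℤ) ^ n + 1)) ∣
      ((h₀ + ∑ τ : Fin (l + 1), b τ * h₂' τ) + (h₁ + ∑ τ : Fin (l + 1), a τ * h₂' τ) * s
        - (h₀ + h₁ * s + h₂ * s ^ 2 - ∑ τ : Fin (l + 1), h₂' τ * e τ)) :=
  dvd_relinearize_sub hb hh₂

/-- Correctness of BFV relinearization (version 1) in `R = ℤ[x]/(xⁿ+1)`
(formalized as `AdjoinRoot (Xⁿ + 1)`): with relinearization keys
`b τ ≡ -(a τ·s + e τ) + T^τ·s² (mod q)` and `h₂ ≡ ∑ T^τ·h₂^{(τ)} (mod q)`,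
the relinearized pair `h₀' = h₀ + ∑ b τ·h₂^{(τ)}`, `h₁' = h₁ + ∑ a τ·h₂^{(τ)}`
satisfies `h₀' + h₁'·s ≡ h₀ + h₁·s + h₂·s² - ∑ h₂^{(τ)}·e τ (mod q)`.
Congruence modulo `q` in `R` is divisibility of the difference by `(q : R)`. -/
theorem bfv_relinearization_v1_correct (n : ℕ) (hn : 1 ≤ n) (q T l : ℕ)
    (hq : 2 ≤ q) (hT : 2 ≤ T)
    (s h₀ h₁ h₂ : AdjoinRoot ((X : Polynomial ℤ) ^ n + 1))
    (a e h₂' b : Fin (l + 1) → AdjoinRoot ((X : Polynomial ℤ) ^ n + 1))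
    (hb : ∀ τ, (q : AdjoinRoot ((X : Polynomial ℤ) ^ n + 1)) ∣
      (b τ - (-(a τ * s + e τ)
        + (T : AdjoinRoot ((X : Polynomial ℤ) ^ n + 1)) ^ (τ : ℕ) * s ^ 2)))
    (hh₂ : (q : AdjoinRoot ((X : Polynomial ℤ) ^ n + 1)) ∣
      (h₂ - ∑ τ : Fin (l + 1), (T : AdjoinRoot ((X : Polynomial ℤ) ^ n + 1)) ^ (τ : ℕ) * h₂' τ)) :
    (q : AdjoinRoot ((X : Polynomial ℤ) ^ n + 1)) ∣
      ((h₀ + ∑ τ : Fin (l + 1), b τ * h₂' τ) + (h₁ + ∑ τ : Fin (l + 1), a τ * h₂' τ) * s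
        - (h₀ + h₁ * s + h₂ * s ^ 2 - ∑ τ : Fin (l + 1), h₂' τ * e τ)) :=
  bfv_relinearization_v1_correct_general n q T l s h₀ h₁ h₂ a e h₂' b hb hh₂
end
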